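/- arXiv:2302.03579 — 14 statements merged into one kernel-verified Lean document; each statement's English description precedes it below -/
import Mathlib

section
/- For a deck of 2n cards indexed 0 to 2n-1, the left shuffle L (deal alternately into left/right piles starting left, stack left pile on top of right) sends card i to position L(i) ≡ n·i + (n-1) (mod 2n+1). -/
/-- The left shuffle on a deck of `2n` cards, defined by dealing alternately
into two piles and stacking the left pile on top of the right (so
`L i = n - 1 - i/2` for even `i` and `L i = 2n - (i+1)/2` for odd `i`),
sends card `i` to position `n·i + (n-1) (mod 2n+1)`. -/
theorem left_shuffle_formula (n : ℕ) (hn : 0 < n) (L : Equiv.Perm (Fin (2 * n)))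
    (hL : ∀ i : Fin (2 * n), (L i : ℕ) =
      if 2 ∣ (i : ℕ) then n - 1 - (i : ℕ) / 2 else 2 * n - ((i : ℕ) + 1) / 2) :
    ∀ i : Fin (2 * n), (L i : ℕ) ≡ n * (i : ℕ) + (n - 1) [MOD 2 * n + 1] := by
  intro i
  have hi : (i : ℕ) < 2 * n := i.isLt
  rw [hL]
  by_cases h : 2 ∣ (i : ℕ)
  · obtain ⟨k, hk⟩ := h
    have e1 : n * (i : ℕ) = 2 * (n * k) := by rw [hk]; ring
    have e2 : (2 * n + 1) * k = 2 * (n * k) + k := by ring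
    have hdiv : (i : ℕ) / 2 = k := by omega
    have key : n * (i : ℕ) + (n - 1) = (n - 1 - (i : ℕ) / 2) + (2 * n + 1) * k := by
      omega
    have hd : 2 ∣ (i : ℕ) := ⟨k, hk⟩
    rw [if_pos hd, Nat.ModEq, key, Nat.add_mul_mod_self_left]
  · obtain ⟨k, hk⟩ : ∃ k, (i : ℕ) = 2 * k + 1 := ⟨(i : ℕ) / 2, by omega⟩
    have e1 : n * (i : ℕ) = 2 * (n * k) + n := by rw [hk]; ring
    have e2 : (2 * n + 1) * k = 2 * (n * k) + k := by ring
    have hdiv : ((i : ℕ) + 1) / 2 = k + 1 := by omega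
    have key : n * (i : ℕ) + (n - 1) = (2 * n - ((i : ℕ) + 1) / 2) + (2 * n + 1) * k := by
      omega
    rw [if_neg h, Nat.ModEq, key, Nat.add_mul_mod_self_left]
end

section
/- For a deck of 2n cards, the right shuffle R (stack the right dealt pile on top of the left) satisfies R(0) = 2n-1 and R(i) ≡ (n-1)·i (mod 2n-1) for 0 < i ≤ 2n-1. -/
/-- The right shuffle on a deck of `2n` cards, defined by dealing alternately
into two piles and stacking the right pile on top of the left (so
`R i = 2n - 1 - i/2` for even `i` and `R i = n - (i+1)/2` for odd `i`),
satisfies `R 0 = 2n - 1` and `R i ≡ (n-1)·i (mod 2n-1)` for `i > 0`. -/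
theorem right_shuffle_formula (n : ℕ) (hn : 0 < n) (R : Equiv.Perm (Fin (2 * n)))
    (hR : ∀ i : Fin (2 * n), (R i : ℕ) =
      if 2 ∣ (i : ℕ) then 2 * n - 1 - (i : ℕ) / 2 else n - ((i : ℕ) + 1) / 2) :
    (∀ i : Fin (2 * n), (i : ℕ) = 0 → (R i : ℕ) = 2 * n - 1) ∧
    (∀ i : Fin (2 * n), 0 < (i : ℕ) → (R i : ℕ) ≡ (n - 1) * (i : ℕ) [MOD 2 * n - 1]) := by
  constructor
  · intro i h0
    rw [hR]
    simp [h0]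
  · intro i hi
    have hib : (i : ℕ) < 2 * n := i.isLt
    rw [hR]
    by_cases h2 : 2 ∣ (i : ℕ)
    · obtain ⟨k, hk⟩ := h2
      rw [if_pos ⟨k, hk⟩, Nat.modEq_iff_dvd]
      refine ⟨(k : ℤ) - 1, ?_⟩
      have e1 : ((2 * n - 1 - (i : ℕ) / 2 : ℕ) : ℤ) = 2 * n - 1 - k := by omega
      have e2 : (((n - 1) * (i : ℕ) : ℕ) : ℤ) = ((n : ℤ) - 1) * (2 * k) := by
        push_cast [hk, Nat.cast_sub hn]
        ring
      rw [e1, e2]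
      push_cast [Nat.cast_sub (show 1 ≤ 2 * n by omega)]
      ring
    · obtain ⟨k, hk⟩ : ∃ k, (i : ℕ) = 2 * k + 1 := ⟨(i : ℕ) / 2, by omega⟩
      rw [if_neg h2, Nat.modEq_iff_dvd]
      refine ⟨(k : ℤ), ?_⟩
      have e1 : ((n - ((i : ℕ) + 1) / 2 : ℕ) : ℤ) = (n : ℤ) - 1 - k := by omega
      have e2 : (((n - 1) * (i : ℕ) : ℕ) : ℤ) = ((n : ℤ) - 1) * (2 * k + 1) := by
        push_cast [hk, Nat.cast_sub hn]
        ring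
      rw [e1, e2]
      push_cast [Nat.cast_sub (show 1 ≤ 2 * n by omega)]
      ring
end

section
/- The order of the left shuffle L on a deck of 2n cards (n ≥ 1) equals the multiplicative order of -2 in (Z/(2n+1))*. -/
/-- The order of the left shuffle `L` on a deck of `2n` cards equals the
multiplicative order of `-2` in `(ℤ/(2n+1))ˣ`. -/
theorem order_left_shuffle (n : ℕ) (hn : 0 < n) (L : Equiv.Perm (Fin (2 * n)))
    (hL : ∀ i : Fin (2 * n), (L i : ℕ) = (n * (i : ℕ) + (n - 1)) % (2 * n + 1)) :
    orderOf L = orderOf (-2 : ZMod (2 * n + 1)) := by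
  set m := 2 * n + 1 with hm
  haveI : NeZero m := ⟨by omega⟩
  -- key: in ZMod m, L acts as multiplication by n on i+1
  have hcast : ∀ j : Fin (2 * n), ((L j : ℕ) : ZMod m) + 1 = (n : ZMod m) * ((j : ℕ) + 1) := by
    intro j
    rw [hL j]
    rw [ZMod.natCast_mod]
    push_cast [Nat.cast_sub hn]
    ring
  have key : ∀ (k : ℕ) (i : Fin (2 * n)),
      (((L ^ k) i : ℕ) : ZMod m) + 1 = (n : ZMod m) ^ k * ((i : ℕ) + 1) := by
    intro k
    induction k with
    | zero => intro i; simp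
    | succ k ih =>
      intro i
      have : (L ^ (k + 1)) i = (L ^ k) (L i) := by
        rw [pow_succ, Equiv.Perm.mul_apply]
      rw [this, ih (L i), hcast i, pow_succ]
      ring
  -- n is the inverse of -2 in ZMod m
  have hinv : (-2 : ZMod m) * (n : ZMod m) = 1 := by
    have h0 : ((m : ℕ) : ZMod m) = 0 := ZMod.natCast_self m
    have : ((2 * n + 1 : ℕ) : ZMod m) = 0 := by rw [← hm]; exact h0
    push_cast at this
    linear_combination -this
  rw [orderOf_eq_orderOf_iff]
  intro k
  constructor
  · intro hk
    -- evaluate at 0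
    have h := key k ⟨0, by omega⟩
    rw [hk] at h
    simp only [Equiv.Perm.coe_one, id_eq] at h
    norm_num at h
    have hnk : (n : ZMod m) ^ k = 1 := h.symm
    calc (-2 : ZMod m) ^ k = (-2 : ZMod m) ^ k * (n : ZMod m) ^ k := by rw [hnk, mul_one]
      _ = ((-2 : ZMod m) * n) ^ k := by rw [mul_pow]
      _ = 1 := by rw [hinv, one_pow]
  · intro hk
    -- (-2)^k = 1 → n^k = 1
    have hnk : (n : ZMod m) ^ k = 1 := by
      have : ((-2 : ZMod m) * n) ^ k = 1 := by rw [hinv, one_pow]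
      rw [mul_pow, hk, one_mul] at this
      exact this
    ext i
    have h := key k i
    rw [hnk, one_mul] at h
    have h' : (((L ^ k) i : ℕ) : ZMod m) = ((i : ℕ) : ZMod m) := by
      have := h
      linear_combination this
    have hval : ((L ^ k) i : ℕ) = (i : ℕ) := by
      have h1 : ((L ^ k) i : ℕ) < m := by have := ((L ^ k) i).isLt; omega
      have h2 : (i : ℕ) < m := by have := i.isLt; omega
      have := congrArg ZMod.val h'
      rwa [ZMod.val_natCast_of_lt h1, ZMod.val_natCast_of_lt h2] at this
    simp only [Equiv.Perm.coe_one, id_eq]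
    exact hval
end

section
/- Let r be the multiplicative order of -2 in (Z/(2n-1))* for n ≥ 2. Then the order of the right shuffle R on 2n cards equals r if r is even, and equals 2r if r is odd. -/
/-- Let `r` be the multiplicative order of `-2` in `(ℤ/(2n-1))ˣ` (for `n ≥ 2`).
The order of the right shuffle `R` on `2n` cards equals `r` if `r` is even and
`2r` if `r` is odd. -/
theorem order_right_shuffle (n : ℕ) (hn : 2 ≤ n) (R : Equiv.Perm (Fin (2 * n)))
    (hR : ∀ i : Fin (2 * n), (R i : ℕ) =
      if (i : ℕ) = 0 then 2 * n - 1 else ((n - 1) * (i : ℕ)) % (2 * n - 1))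
    (r : ℕ) (hr : r = orderOf (-2 : ZMod (2 * n - 1))) :
    orderOf R = if Even r then r else 2 * r := by
  have hM3 : 3 ≤ 2 * n - 1 := by omega
  set M := 2 * n - 1 with hMdef
  have h2n : 0 < 2 * n := by omega
  set z : Fin (2 * n) := ⟨0, h2n⟩ with hz
  set e : Fin (2 * n) := ⟨M, by omega⟩ with he
  have hze : z ≠ e := by
    simp only [Fin.ne_iff_vne, hz, he]
    omega
  have hcop : Nat.Coprime M (n - 1) := by
    have h1 : Nat.gcd M (n - 1) ∣ M := Nat.gcd_dvd_left _ _
    have h2 : Nat.gcd M (n - 1) ∣ 2 * (n - 1) := (Nat.gcd_dvd_right _ _).mul_left 2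
    have h3 : Nat.gcd M (n - 1) ∣ M - 2 * (n - 1) := Nat.dvd_sub h1 h2
    have h4 : M - 2 * (n - 1) = 1 := by omega
    rw [h4] at h3
    exact Nat.eq_one_of_dvd_one h3
  have hRz : R z = e := by
    apply Fin.ext
    rw [hR]
    simp [hz, he]
  have hRe : R e = z := by
    apply Fin.ext
    rw [hR]
    simp only [hz, he]
    rw [if_neg (by omega)]
    exact Nat.mul_mod_left _ _
  have hmid : ∀ x : Fin (2 * n), x ≠ z → x ≠ e →
      (R x : ℕ) = ((n - 1) * (x : ℕ)) % M ∧ R x ≠ z ∧ R x ≠ e := by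
    intro x hx1 hx2
    have hxv1 : (x : ℕ) ≠ 0 := fun h => hx1 (Fin.ext h)
    have hxv2 : (x : ℕ) ≠ M := fun h => hx2 (Fin.ext h)
    have hxlt : (x : ℕ) < 2 * n := x.2
    have hval : (R x : ℕ) = ((n - 1) * (x : ℕ)) % M := by
      rw [hR, if_neg hxv1]
    refine ⟨hval, ?_, ?_⟩
    · intro h
      have h0 : ((n - 1) * (x : ℕ)) % M = 0 := by
        rw [← hval, h]
      have hdvd : M ∣ (n - 1) * (x : ℕ) := Nat.dvd_of_mod_eq_zero h0
      have hdx : M ∣ (x : ℕ) := hcop.dvd_of_dvd_mul_left hdvd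
      have := Nat.le_of_dvd (Nat.pos_of_ne_zero hxv1) hdx
      omega
    · intro h
      have : (R x : ℕ) = M := by rw [h]
      rw [hval] at this
      have := Nat.mod_lt ((n - 1) * (x : ℕ)) (show 0 < M by omega)
      omega
  set σ : Equiv.Perm (Fin (2 * n)) := Equiv.swap z e with hσ
  set τ : Equiv.Perm (Fin (2 * n)) := σ * R with hτ
  have hτz : τ z = z := by
    rw [hτ, Equiv.Perm.mul_apply, hRz, hσ, Equiv.swap_apply_right]
  have hτe : τ e = e := by
    rw [hτ, Equiv.Perm.mul_apply, hRe, hσ, Equiv.swap_apply_left]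
  have hτmid : ∀ x : Fin (2 * n), x ≠ z → x ≠ e → τ x = R x := by
    intro x hx1 hx2
    obtain ⟨_, h2, h3⟩ := hmid x hx1 hx2
    rw [hτ, Equiv.Perm.mul_apply, hσ, Equiv.swap_apply_of_ne_of_ne h2 h3]
  have hRστ : R = σ * τ := by
    rw [hτ, ← mul_assoc, hσ, Equiv.swap_mul_self, one_mul]
  have hdisj : σ.Disjoint τ := by
    intro x
    by_cases hx1 : x = z
    · right; rw [hx1]; exact hτz
    by_cases hx2 : x = e
    · right; rw [hx2]; exact hτe
    · left; rw [hσ]; exact Equiv.swap_apply_of_ne_of_ne hx1 hx2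
  have horderσ : orderOf σ = 2 := by
    have hp : Fact (Nat.Prime 2) := ⟨Nat.prime_two⟩
    apply orderOf_eq_prime
    · rw [sq, hσ, Equiv.swap_mul_self]
    · intro h
      apply hze
      have := Equiv.swap_apply_left z e
      rw [← hσ, h] at this
      simpa using this
  -- middle dynamics
  set u : ZMod M := ((n - 1 : ℕ) : ZMod M) with hu
  have key : ∀ k : ℕ, ∀ x : Fin (2 * n), x ≠ z → x ≠ e →
      (((τ ^ k) x : ℕ) : ZMod M) = u ^ k * ((x : ℕ) : ZMod M) ∧
        (τ ^ k) x ≠ z ∧ (τ ^ k) x ≠ e := by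
    intro k
    induction k with
    | zero => intro x hx1 hx2; simp [hx1, hx2]
    | succ k ih =>
      intro x hx1 hx2
      obtain ⟨h1, h2, h3⟩ := ih x hx1 hx2
      obtain ⟨hy1, hy2, hy3⟩ := hmid _ h2 h3
      have hstep : (τ ^ (k + 1)) x = R ((τ ^ k) x) := by
        rw [pow_succ' τ k, Equiv.Perm.mul_apply, hτmid _ h2 h3]
      refine ⟨?_, by rw [hstep]; exact hy2, by rw [hstep]; exact hy3⟩
      rw [hstep, hy1, ZMod.natCast_mod, Nat.cast_mul, ← hu, h1]
      ring
  have hfix : ∀ (k : ℕ) (x : Fin (2 * n)), τ x = x → (τ ^ k) x = x := by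
    intro k x hx
    induction k with
    | zero => simp
    | succ k ih => rw [pow_succ, Equiv.Perm.mul_apply, hx, ih]
  have hone : (⟨1, by omega⟩ : Fin (2 * n)) ≠ z ∧ (⟨1, by omega⟩ : Fin (2 * n)) ≠ e := by
    constructor <;> (simp only [Fin.ne_iff_vne, hz, he]; omega)
  have hτiff : ∀ k : ℕ, τ ^ k = 1 ↔ u ^ k = 1 := by
    intro k
    constructor
    · intro h
      obtain ⟨h1, _, _⟩ := key k ⟨1, by omega⟩ hone.1 hone.2
      rw [h] at h1
      simpa using h1.symm
    · intro h
      apply Equiv.ext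
      intro x
      by_cases hx1 : x = z
      · rw [hx1]; simpa using hfix k z hτz
      by_cases hx2 : x = e
      · rw [hx2]; simpa using hfix k e hτe
      obtain ⟨h1, h2, h3⟩ := key k x hx1 hx2
      rw [h, one_mul] at h1
      have hmod := (ZMod.natCast_eq_natCast_iff _ _ _).mp h1
      have hmod' : ((τ ^ k) x : ℕ) % M = (x : ℕ) % M := hmod
      have b1 : ((τ ^ k) x : ℕ) < 2 * n := ((τ ^ k) x).2
      have b2 : (x : ℕ) < 2 * n := x.2
      have b3 : ((τ ^ k) x : ℕ) ≠ M := fun hc => h3 (Fin.ext hc)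
      have b4 : (x : ℕ) ≠ M := fun hc => hx2 (Fin.ext hc)
      have b5 : ((τ ^ k) x : ℕ) < M := by omega
      have b6 : (x : ℕ) < M := by omega
      rw [Nat.mod_eq_of_lt b5, Nat.mod_eq_of_lt b6] at hmod'
      have : ((τ ^ k) x : ℕ) = (x : ℕ) := hmod'
      simpa using Fin.ext this
  have hu2 : u * (-2) = 1 := by
    have hnat : 2 * (n - 1) + 1 = M := by omega
    have hc : ((2 * (n - 1) + 1 : ℕ) : ZMod M) = 0 := by
      rw [hnat]; exact ZMod.natCast_self M
    push_cast at hc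
    rw [← hu] at hc
    linear_combination -hc
  have horder_u : orderOf u = orderOf (-2 : ZMod M) := by
    rw [orderOf_eq_orderOf_iff]
    intro k
    constructor
    · intro h
      have : (u * (-2)) ^ k = 1 := by rw [hu2, one_pow]
      rwa [mul_pow, h, one_mul] at this
    · intro h
      have : (u * (-2)) ^ k = 1 := by rw [hu2, one_pow]
      rwa [mul_pow, h, mul_one] at this
  have horderτ : orderOf τ = r := by
    rw [hr, ← horder_u, orderOf_eq_orderOf_iff]
    exact hτiff
  have hlcm : orderOf R = Nat.lcm 2 r := by
    rw [hRστ, hdisj.orderOf, horderσ, horderτ]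
  rw [hlcm]
  by_cases hev : Even r
  · rw [if_pos hev]
    obtain ⟨k, hk⟩ := hev
    have : r = 2 * k := by omega
    rw [this]
    rw [show (2 : ℕ) = 2 * 1 from rfl, Nat.lcm_mul_left]
    simp
  · rw [if_neg hev]
    have hodd : Odd r := Nat.odd_iff.mpr (by
      rcases Nat.even_or_odd r with h | h
      · exact absurd h hev
      · exact Nat.odd_iff.mp h)
    have hcop2 : Nat.Coprime 2 r := Nat.coprime_two_left.mpr hodd
    exact hcop2.lcm_eq_mul
end

section
/- On a deck of 2n cards, L∘I = I∘L = V, where I is the in-shuffle, L is the left shuffle, and V reverses the deck. Equivalently, L = V∘I^{-1} = I^{-1}∘V. -/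
lemma key_mod (n k : ℕ) (hn : 0 < n) (hk : k < 2 * n) :
    (2 * (n * k) + 2 * n - 1) % (2 * n + 1) = 2 * n - 1 - k := by
  have he : 2 * (n * k) + 2 * n - 1 = (2 * n - 1 - k) + k * (2 * n + 1) := by
    have h3 : k * (2 * n + 1) = 2 * (n * k) + k := by ring
    set p := n * k
    omega
  rw [he, Nat.add_mul_mod_self_right, Nat.mod_eq_of_lt (by omega)]

/-- On a deck of `2n` cards, `L ∘ I = I ∘ L = V`, equivalently
`L = V ∘ I⁻¹ = I⁻¹ ∘ V`, where `I` is the in-shuffle, `L` the left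
shuffle and `V` the deck reversal. -/
theorem left_shuffle_in_shuffle_relation (n : ℕ) (hn : 0 < n)
    (L I V : Equiv.Perm (Fin (2 * n)))
    (hI : ∀ i : Fin (2 * n), (I i : ℕ) = (2 * (i : ℕ) + 1) % (2 * n + 1))
    (hL : ∀ i : Fin (2 * n), (L i : ℕ) = (n * (i : ℕ) + (n - 1)) % (2 * n + 1))
    (hV : ∀ i : Fin (2 * n), (V i : ℕ) = 2 * n - 1 - (i : ℕ)) :
    L * I = V ∧ I * L = V ∧ L = V * I⁻¹ ∧ L = I⁻¹ * V := by
  have h1 : L * I = V := by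
    ext i
    have hk := i.isLt
    simp only [Equiv.Perm.mul_apply, hL, hI, hV]
    have hm : (n * ((2 * (i : ℕ) + 1) % (2 * n + 1)) + (n - 1)) % (2 * n + 1)
        = (n * (2 * (i : ℕ) + 1) + (n - 1)) % (2 * n + 1) := by
      conv_lhs => rw [Nat.add_mod, Nat.mul_mod, Nat.mod_mod_of_dvd _ dvd_rfl]
      conv_rhs => rw [Nat.add_mod, Nat.mul_mod]
    rw [hm]
    have he : n * (2 * (i : ℕ) + 1) + (n - 1) = 2 * (n * (i : ℕ)) + 2 * n - 1 := by
      have h2 : n * (2 * (i : ℕ) + 1) = 2 * (n * (i : ℕ)) + n := by ring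
      omega
    rw [he, key_mod n (i : ℕ) hn hk]
  have h2 : I * L = V := by
    ext i
    have hk := i.isLt
    simp only [Equiv.Perm.mul_apply, hL, hI, hV]
    have hm : (2 * ((n * (i : ℕ) + (n - 1)) % (2 * n + 1)) + 1) % (2 * n + 1)
        = (2 * (n * (i : ℕ) + (n - 1)) + 1) % (2 * n + 1) := by
      conv_lhs => rw [Nat.add_mod, Nat.mul_mod, Nat.mod_mod_of_dvd _ dvd_rfl]
      conv_rhs => rw [Nat.add_mod, Nat.mul_mod]
    rw [hm]
    have he : 2 * (n * (i : ℕ) + (n - 1)) + 1 = 2 * (n * (i : ℕ)) + 2 * n - 1 := by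
      omega
    rw [he, key_mod n (i : ℕ) hn hk]
  refine ⟨h1, h2, ?_, ?_⟩
  · rw [← h1, mul_inv_cancel_right]
  · rw [← h2, inv_mul_cancel_left]
end

section
/- On a deck of 2n cards, R∘O = O∘R = V, where O is the out-shuffle, R is the right shuffle, and V reverses the deck. Equivalently, R = V∘O^{-1} = O^{-1}∘V. -/
private lemma shuffle_key (n i : ℕ) (hn : 0 < n) (hi : 0 < i) (him : i < 2*n-1) :
    (n-1) * (2*i % (2*n-1)) % (2*n-1) = 2*n-1 - i ∧
    2 * ((n-1)*i % (2*n-1)) % (2*n-1) = 2*n-1 - i := by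
  set m := 2*n-1 with hm
  have hm1 : 1 ≤ m := by omega
  have key : ((n-1) * (2*i)) % m = m - i := by
    have e1 : (n-1)*(2*i) = (m-1)*i := by
      have h2 : m - 1 = 2*(n-1) := by omega
      rw [h2]; ring
    have hp1 : m ≤ m*i := Nat.le_mul_of_pos_right m hi
    have hp2 : i ≤ m*i := Nat.le_mul_of_pos_left i hm1
    have h1 : (n-1) * (2*i) = m*(i-1) + (m - i) := by
      rw [e1, Nat.sub_mul, Nat.mul_sub]
      omega
    rw [h1, Nat.mul_add_mod, Nat.mod_eq_of_lt (by omega)]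
  constructor
  · have h : (n-1)*(2*i % m) % m = (n-1)*(2*i) % m :=
      (Nat.mod_modEq (2*i) m).mul_left (n-1)
    exact h.trans key
  · have h : 2*((n-1)*i % m) % m = 2*((n-1)*i) % m :=
      (Nat.mod_modEq ((n-1)*i) m).mul_left 2
    have e : 2*((n-1)*i) = (n-1)*(2*i) := by ring
    rw [h, e, key]

/-- On a deck of `2n` cards, `R ∘ O = O ∘ R = V`, equivalently
`R = V ∘ O⁻¹ = O⁻¹ ∘ V`, where `O` is the out-shuffle, `R` the right
shuffle and `V` the deck reversal. -/
theorem right_shuffle_out_shuffle_relation (n : ℕ) (hn : 0 < n)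
    (R O V : Equiv.Perm (Fin (2 * n)))
    (hO : ∀ i : Fin (2 * n), (O i : ℕ) =
      if (i : ℕ) = 2 * n - 1 then 2 * n - 1 else (2 * (i : ℕ)) % (2 * n - 1))
    (hR : ∀ i : Fin (2 * n), (R i : ℕ) =
      if (i : ℕ) = 0 then 2 * n - 1 else ((n - 1) * (i : ℕ)) % (2 * n - 1))
    (hV : ∀ i : Fin (2 * n), (V i : ℕ) = 2 * n - 1 - (i : ℕ)) :
    R * O = V ∧ O * R = V ∧ R = V * O⁻¹ ∧ R = O⁻¹ * V := by
  have hm1 : 1 ≤ 2*n - 1 := by omega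
  have h1 : R * O = V := by
    ext i
    rw [Equiv.Perm.mul_apply, hR, hO, hV]
    have hi : (i : ℕ) < 2 * n := i.isLt
    by_cases hc : (i : ℕ) = 2*n - 1
    · rw [if_pos hc, if_neg (by omega)]
      rw [hc, Nat.mul_mod_left]
      omega
    · rw [if_neg hc]
      by_cases h0 : (i : ℕ) = 0
      · rw [h0]; simp
      · have hne : 2 * (i:ℕ) % (2*n-1) ≠ 0 := by
          rcases lt_or_ge (2*(i:ℕ)) (2*n-1) with h|h
          · rw [Nat.mod_eq_of_lt h]; omega
          · rw [Nat.mod_eq_sub_mod h, Nat.mod_eq_of_lt (by omega)]; omega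
        rw [if_neg hne]
        exact (shuffle_key n (i:ℕ) hn (by omega) (by omega)).1
  have h2 : O * R = V := by
    ext i
    rw [Equiv.Perm.mul_apply, hO, hR, hV]
    have hi : (i : ℕ) < 2 * n := i.isLt
    by_cases h0 : (i : ℕ) = 0
    · rw [if_pos h0, if_pos rfl, h0]; omega
    · rw [if_neg h0]
      by_cases hc : (i : ℕ) = 2*n - 1
      · rw [hc, Nat.mul_mod_left, if_neg (by omega)]
        simp
      · have hlt : (n-1) * (i:ℕ) % (2*n-1) < 2*n-1 := Nat.mod_lt _ (by omega)
        rw [if_neg (by omega)]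
        exact (shuffle_key n (i:ℕ) hn (by omega) (by omega)).2
  exact ⟨h1, h2, by rw [← h1]; group, by rw [← h2]; group⟩
end

section
/- For a deck of 2^k cards, writing a position i in binary as x_{k-1} x_{k-2} ... x_1 x_0, the left shuffle sends i to the position with binary representation x_0 x̄_{k-1} x̄_{k-2} ... x̄_2 x̄_1, where x̄ = 1 - x. -/
/-!
Write `i = 2 q + b` with `b ∈ {0, 1}` and `n = 2 ^ (k - 1)`. Then
`n i + (n - 1) = (2 n + 1) q + (n b + (n - 1 - q))` and the last summand is below `2 n + 1`,
so `L i = n b + (n - 1 - q)`: its leading bit is `b = x_0`, and below it sit the bits of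
`n - 1 - q`, which are the complements of the bits of `q = i / 2`, i.e. of `x_{k-1} … x_1`.
-/

theorem mul_add_sub_one_mod_two_mul_add_one {n i : ℕ} (hi : i < 2 * n) :
    (n * i + (n - 1)) % (2 * n + 1) = n * (i % 2) + (n - (i / 2 + 1)) := by
  have hbit : i % 2 ≤ 1 := Nat.le_of_lt_succ (Nat.mod_lt i two_pos)
  have hrem : n * (i % 2) + (n - (i / 2 + 1)) < 2 * n + 1 := by
    have := Nat.mul_le_mul_left n hbit
    omega
  have hdiv : n * i + (n - 1) =
      (2 * n + 1) * (i / 2) + (n * (i % 2) + (n - (i / 2 + 1))) := by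
    have hi2 : n * i = 2 * n * (i / 2) + n * (i % 2) := by
      rw [mul_comm 2 n, mul_assoc, ← mul_add, Nat.div_add_mod]
    rw [add_mul, one_mul]
    omega
  rw [hdiv, Nat.mul_add_mod, Nat.mod_eq_of_lt hrem]

theorem left_shuffle_binary_general (k : ℕ)
    (L : Equiv.Perm (Fin (2 ^ k)))
    (hL : ∀ i : Fin (2 ^ k), (L i : ℕ) =
      (2 ^ (k - 1) * (i : ℕ) + (2 ^ (k - 1) - 1)) % (2 ^ k + 1)) :
    ∀ i : Fin (2 ^ k),
      Nat.testBit (L i : ℕ) (k - 1) = Nat.testBit (i : ℕ) 0 ∧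
      ∀ j : ℕ, j < k - 1 →
        Nat.testBit (L i : ℕ) j = !Nat.testBit (i : ℕ) (j + 1) := by
  intro i
  cases k with
  | zero => simp
  | succ m =>
    have hi : (i : ℕ) < 2 * 2 ^ m := by rw [← pow_succ']; exact i.isLt
    have hq : (i : ℕ) / 2 < 2 ^ m := by omega
    have hr : 2 ^ m - ((i : ℕ) / 2 + 1) < 2 ^ m := by omega
    have hLi : (L i : ℕ) = 2 ^ m * ((i : ℕ) % 2) + (2 ^ m - ((i : ℕ) / 2 + 1)) := by
      have hmod := mul_add_sub_one_mod_two_mul_add_one hi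
      rw [← pow_succ'] at hmod
      rw [hL, Nat.add_sub_cancel, hmod]
    simp only [Nat.add_sub_cancel, hLi, Nat.testBit_two_pow_mul_add _ hr]
    refine ⟨by simp [Nat.testBit_zero], fun j hj => ?_⟩
    simp [hj, Nat.testBit_two_pow_sub_succ hq, Nat.testBit_div_two]

/-- On a deck of `2^k` cards, the left shuffle in binary: if `i` has binary
digits `x_{k-1} … x_1 x_0` then `L i` has binary digits
`x_0 x̄_{k-1} x̄_{k-2} … x̄_1` (rotate right by one, complement all bits
except the new leading bit). -/
theorem left_shuffle_binary (k : ℕ) (hk : 1 ≤ k)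
    (L : Equiv.Perm (Fin (2 ^ k)))
    (hL : ∀ i : Fin (2 ^ k), (L i : ℕ) =
      (2 ^ (k - 1) * (i : ℕ) + (2 ^ (k - 1) - 1)) % (2 ^ k + 1)) :
    ∀ i : Fin (2 ^ k),
      Nat.testBit (L i : ℕ) (k - 1) = Nat.testBit (i : ℕ) 0 ∧
      ∀ j : ℕ, j < k - 1 →
        Nat.testBit (L i : ℕ) j = !Nat.testBit (i : ℕ) (j + 1) :=
  left_shuffle_binary_general k L hL
end

section
/- For a deck of 2^k cards, writing position i in binary as x_{k-1} ... x_1 x_0, the right shuffle sends i to the position with binary representation x̄_0 x̄_{k-1} x̄_{k-2} ... x̄_1, where x̄ = 1 - x. -/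
/-- On a deck of `2^k` cards, the right shuffle in binary: if `i` has binary
digits `x_{k-1} … x_1 x_0` then `R i` has binary digits
`x̄_0 x̄_{k-1} x̄_{k-2} … x̄_1` (rotate right by one and complement all
bits). -/
theorem right_shuffle_binary (k : ℕ) (hk : 1 ≤ k)
    (R : Equiv.Perm (Fin (2 ^ k)))
    (hR : ∀ i : Fin (2 ^ k), (R i : ℕ) =
      if (i : ℕ) = 0 then 2 ^ k - 1
      else ((2 ^ (k - 1) - 1) * (i : ℕ)) % (2 ^ k - 1)) :
    ∀ i : Fin (2 ^ k),
      Nat.testBit (R i : ℕ) (k - 1) = !Nat.testBit (i : ℕ) 0 ∧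
      ∀ j : ℕ, j < k - 1 →
        Nat.testBit (R i : ℕ) j = !Nat.testBit (i : ℕ) (j + 1) := by
  intro i
  have hP1 : 1 ≤ 2 ^ (k - 1) := Nat.one_le_two_pow
  have hk2 : 2 ^ k = 2 * 2 ^ (k - 1) := by
    conv_lhs => rw [← Nat.sub_add_cancel hk]
    rw [pow_succ]; ring
  set q : ℕ := (i : ℕ) / 2 with hqdef
  set b : ℕ := (i : ℕ) % 2 with hbdef
  have hi2 : (i : ℕ) = 2 * q + b := by omega
  have hilt : (i : ℕ) < 2 ^ k := i.isLt
  have hq : q < 2 ^ (k - 1) := by omega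
  have hb : b < 2 := by omega
  clear_value q b
  set r : ℕ := 2 ^ (k - 1) * b + q with hrdef
  clear_value r
  have hbcase : (b = 0 ∧ 2 ^ (k - 1) * b = 0) ∨ (b = 1 ∧ 2 ^ (k - 1) * b = 2 ^ (k - 1)) := by
    interval_cases b <;> simp
  have hrlt : r < 2 ^ k := by omega
  have hrN : r ≤ 2 ^ k - 1 := by omega
  -- uniform formula: R i = 2^k - (r + 1)
  have hRi : (R i : ℕ) = 2 ^ k - (r + 1) := by
    rw [hR]
    by_cases h0 : (i : ℕ) = 0
    · have hq0 : q = 0 := by omega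
      have hb0 : b = 0 := by omega
      rw [if_pos h0, hrdef, hq0, hb0]
      simp
    · rw [if_neg h0]
      have key : (2 ^ (k - 1) - 1) * (i : ℕ) + r = (2 ^ k - 1) * (q + b) := by
        have hi2z : ((i : ℕ) : ℤ) = 2 * q + b := by exact_mod_cast hi2
        have hk2z : (2 : ℤ) ^ k = 2 * 2 ^ (k - 1) := by exact_mod_cast hk2
        have hrz : (r : ℤ) = 2 ^ (k - 1) * b + q := by exact_mod_cast hrdef
        zify [hP1, Nat.one_le_two_pow (n := k)]
        linear_combination ((2 : ℤ) ^ (k - 1) - 1) * hi2z + hrz - ((q : ℤ) + b) * hk2z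
      have hr1 : 1 ≤ r := by omega
      have hqb : 1 ≤ q + b := by rw [hi2] at h0; omega
      have hx : (2 ^ (k - 1) - 1) * (i : ℕ) =
          (2 ^ k - 1) * (q + b - 1) + ((2 ^ k - 1) - r) := by
        have h1 : (2 ^ k - 1) * (q + b) = (2 ^ k - 1) * (q + b - 1) + (2 ^ k - 1) := by
          conv_lhs => rw [show q + b = (q + b - 1) + 1 by omega]
          ring
        omega
      rw [hx, Nat.mul_add_mod, Nat.mod_eq_of_lt (by omega), Nat.sub_sub, Nat.add_comm 1 r]
  have hbit : ∀ j : ℕ, Nat.testBit (R i : ℕ) j = (decide (j < k) && ! Nat.testBit r j) := by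
    intro j
    rw [hRi, Nat.testBit_two_pow_sub_succ hrlt]
  constructor
  · rw [hbit, hrdef, Nat.testBit_two_pow_mul_add b hq (k - 1)]
    simp only [lt_irrefl, if_false, Nat.sub_self]
    have h1 : decide (k - 1 < k) = true := by simp; omega
    rw [h1, Bool.true_and]
    simp only [Nat.testBit_zero]
    have hbb : b % 2 = (i : ℕ) % 2 := by omega
    rw [hbb]
  · intro j hj
    rw [hbit, hrdef, Nat.testBit_two_pow_mul_add b hq j, if_pos hj]
    have h1 : decide (j < k) = true := by simp; omega
    rw [h1, Bool.true_and]
    congr 1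
    rw [Nat.testBit_add_one, hqdef]
end

section
/- For a deck of 2^k cards and positions i, j, let i XOR j have binary digits x_{k-1}...x_0. Define shuffles S_0,...,S_{k-1} by: if k is odd, S_r = L when x_r = 0 and S_r = R when x_r = 1; if k is even, S_r = R when x_r = 0 and S_r = L when x_r = 1. Then the composite S_{k-1}∘...∘S_1∘S_0 swaps the cards in positions i and j (and in particular maps i to j and j to i). -/
/-!
In binary both shuffles are affine maps `w ↦ ρ w ⊕ c`, where `ρ` rotates the `k` bits right by
one and the mask `c` is `11…1` for `R` and `01…1` for `L`. Composing `k` of them gives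
`ρ ^ k = id` followed by a XOR with a fixed mask: the all-ones parts are rotation invariant and
contribute `k mod 2` to every bit, while the leading bit of the `r`-th mask is rotated down to
position `r` by the remaining shuffles. So bit `r` of the mask is `(k odd) ⊕ [S_r = L]`, which
the choice of the `S_r` makes equal to bit `r` of `i XOR j`; and XOR with `i XOR j` swaps `i`
and `j`.
-/

theorem mul_add_sub_one_mod_two_mul_add_one_s11 {A w : ℕ} (hw : w < 2 * A) :
    (A * w + (A - 1)) % (2 * A + 1) = A * (w % 2) + (A - (w / 2 + 1)) := by
  obtain ⟨q, b, hb, rfl⟩ : ∃ q b, b < 2 ∧ w = 2 * q + b :=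
    ⟨w / 2, w % 2, Nat.mod_lt _ two_pos, (Nat.div_add_mod w 2).symm⟩
  have hq : q + 1 ≤ A := by omega
  rw [show (2 * q + b) % 2 = b by omega, show (2 * q + b) / 2 = q by omega]
  have h : A * (2 * q + b) + (A - 1) = A * b + (A - (q + 1)) + (2 * A + 1) * q := by
    zify [hq, show 1 ≤ A by omega]; ring
  rw [h, Nat.add_mul_mod_self_left, Nat.mod_eq_of_lt (by interval_cases b <;> omega)]

theorem sub_one_mul_mod_two_mul_sub_one {A w : ℕ} (hw : w < 2 * A) (hw0 : w ≠ 0) :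
    ((A - 1) * w) % (2 * A - 1) = A * (1 - w % 2) + (A - (w / 2 + 1)) := by
  obtain ⟨q, b, hb, rfl⟩ : ∃ q b, b < 2 ∧ w = 2 * q + b :=
    ⟨w / 2, w % 2, Nat.mod_lt _ two_pos, (Nat.div_add_mod w 2).symm⟩
  have hq : q + 1 ≤ A := by omega
  rw [show (2 * q + b) % 2 = b by omega, show (2 * q + b) / 2 = q by omega]
  interval_cases b
  · obtain ⟨p, rfl⟩ : ∃ p, q = p + 1 := ⟨q - 1, by omega⟩
    have h : (A - 1) * (2 * (p + 1) + 0) =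
        A * (1 - 0) + (A - (p + 1 + 1)) + (2 * A - 1) * p := by
      zify [hq, show 1 ≤ A by omega, show 1 ≤ 2 * A by omega]; ring
    rw [h, Nat.add_mul_mod_self_left, Nat.mod_eq_of_lt (by omega)]
  · have h : (A - 1) * (2 * q + 1) = A * (1 - 1) + (A - (q + 1)) + (2 * A - 1) * q := by
      zify [hq, show 1 ≤ A by omega, show 1 ≤ 2 * A by omega]; ring
    rw [h, Nat.add_mul_mod_self_left, Nat.mod_eq_of_lt (by omega)]

theorem testBit_two_pow_mul_add_two_pow_sub_succ {n b q t : ℕ} (hq : q < 2 ^ n) (ht : t ≤ n) :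
    (2 ^ n * b + (2 ^ n - (q + 1))).testBit t =
      if t = n then decide (b % 2 = 1) else !q.testBit t := by
  rw [Nat.testBit_two_pow_mul_add _ (by omega)]
  rcases ht.lt_or_eq with ht | rfl
  · simp [ht, ht.ne, Nat.testBit_two_pow_sub_succ hq]
  · simp [Nat.testBit_zero]

theorem testBit_add_one_mod_succ {n t : ℕ} (w : ℕ) (ht : t ≤ n) :
    w.testBit ((t + 1) % (n + 1)) = if t = n then decide (w % 2 = 1) else (w / 2).testBit t := by
  rcases ht.lt_or_eq with ht | rfl
  · rw [Nat.mod_eq_of_lt (by omega), Nat.testBit_div_two, if_neg ht.ne]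
  · simp [Nat.testBit_zero]

theorem List.getD_append_singleton_false (l : List Bool) (b : Bool) (s : ℕ) :
    (l ++ [b]).getD s false = (l.getD s false ^^ (b && decide (s = l.length))) := by
  rcases lt_trichotomy s l.length with h | rfl | h
  · rw [List.getD_append _ _ _ _ h]
    simp [h.ne]
  · rw [List.getD_append_right _ _ _ _ le_rfl, List.getD_eq_default _ _ le_rfl]
    simp
  · rw [List.getD_append_right _ _ _ _ h.le, List.getD_eq_default _ _ h.le,
      List.getD_eq_default _ _ (by simp; omega)]
    simp [h.ne']

/-- `σ` acts on `n + 1`-bit strings as a right rotation by one followed by XOR with the mask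
`c`. -/
def IsRotateRightXor (n : ℕ) (σ : Fin (2 ^ (n + 1)) → Fin (2 ^ (n + 1))) (c : ℕ → Bool) :
    Prop :=
  ∀ w t, t ≤ n → (σ w : ℕ).testBit t = ((w : ℕ).testBit ((t + 1) % (n + 1)) ^^ c t)

theorem isRotateRightXor_of_eq_mod {n : ℕ} {L : Fin (2 ^ (n + 1)) → Fin (2 ^ (n + 1))}
    (hL : ∀ i : Fin (2 ^ (n + 1)), (L i : ℕ) = (2 ^ n * (i : ℕ) + (2 ^ n - 1)) % (2 ^ (n + 1) + 1)) :
    IsRotateRightXor n L fun t => decide (t ≠ n) := by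
  intro w t ht
  have hw : (w : ℕ) < 2 * 2 ^ n := by rw [← pow_succ']; exact w.isLt
  rw [hL, show 2 ^ (n + 1) + 1 = 2 * 2 ^ n + 1 by ring, mul_add_sub_one_mod_two_mul_add_one_s11 hw,
    testBit_two_pow_mul_add_two_pow_sub_succ (by omega) ht, testBit_add_one_mod_succ _ ht]
  split_ifs <;> simp_all

theorem isRotateRightXor_of_eq_ite_mod {n : ℕ} {R : Fin (2 ^ (n + 1)) → Fin (2 ^ (n + 1))}
    (hR : ∀ i : Fin (2 ^ (n + 1)), (R i : ℕ) =
      if (i : ℕ) = 0 then 2 ^ (n + 1) - 1 else ((2 ^ n - 1) * (i : ℕ)) % (2 ^ (n + 1) - 1)) :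
    IsRotateRightXor n R fun _ => true := by
  intro w t ht
  have hw : (w : ℕ) < 2 * 2 ^ n := by rw [← pow_succ']; exact w.isLt
  have hRw : (R w : ℕ) = 2 ^ n * (1 - w % 2) + (2 ^ n - (w / 2 + 1)) := by
    rw [hR, show 2 ^ (n + 1) - 1 = 2 * 2 ^ n - 1 by ring_nf]
    split_ifs with hw0
    · have := @Nat.one_le_two_pow n
      simp only [hw0, Nat.zero_mod, Nat.zero_div]
      omega
    · exact sub_one_mul_mod_two_mul_sub_one hw hw0
  rw [hRw, testBit_two_pow_mul_add_two_pow_sub_succ (by omega) ht, testBit_add_one_mod_succ _ ht]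
  split_ifs
  · rcases Nat.mod_two_eq_zero_or_one (w : ℕ) with h | h <;> simp [h]
  · simp

/-- The composite of the shuffles spelled by the word `l` (`true` for `L`, `false` for `R`),
the first letter acting first. -/
def shuffleWord {α : Type*} (L R : Equiv.Perm α) (l : List Bool) : Equiv.Perm α :=
  (l.map fun b => bif b then L else R).reverse.prod

theorem shuffleWord_append_singleton {α : Type*} (L R : Equiv.Perm α) (l : List Bool) (b : Bool) :
    shuffleWord L R (l ++ [b]) = (bif b then L else R) * shuffleWord L R l := by
  simp [shuffleWord]

section ShuffleWord

variable {n : ℕ} {L R : Equiv.Perm (Fin (2 ^ (n + 1)))}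

theorem IsRotateRightXor.cond (hL : IsRotateRightXor n L fun t => decide (t ≠ n))
    (hR : IsRotateRightXor n R fun _ => true) (b : Bool) :
    IsRotateRightXor n ⇑(bif b then L else R) fun t => !(b && decide (t = n)) := by
  intro w t ht
  cases b
  · simp [hR w t ht]
  · simp [hL w t ht]

/- Bit `t` after the first `m` letters comes from bit `s = t + m mod (n + 1)` of the input. Every
letter flips it once, except that the mask of `L` spares the top position, which the bit occupies
exactly while letter `s` acts, if `s < m`. -/
theorem testBit_shuffleWord_apply (hL : IsRotateRightXor n L fun t => decide (t ≠ n))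
    (hR : IsRotateRightXor n R fun _ => true) {l : List Bool} (hl : l.length ≤ n + 1)
    (w : Fin (2 ^ (n + 1))) {t : ℕ} (ht : t ≤ n) :
    (shuffleWord L R l w : ℕ).testBit t =
      ((w : ℕ).testBit ((t + l.length) % (n + 1)) ^^
        (decide (Odd l.length) ^^ l.getD ((t + l.length) % (n + 1)) false)) := by
  induction l using List.reverseRecOn generalizing t with
  | nil => simp [shuffleWord, Nat.mod_eq_of_lt (Nat.lt_succ_of_le ht)]
  | append_singleton l b ih =>
    simp only [List.length_append, List.length_singleton] at hl ⊢
    set s := (t + (l.length + 1)) % (n + 1) with hs_def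
    have hs : ((t + 1) % (n + 1) + l.length) % (n + 1) = s := by
      rw [Nat.mod_add_mod, add_assoc, add_comm 1]
    have hs_top : decide (s = l.length) = decide (t = n) := by
      rw [decide_eq_decide]
      rcases Nat.lt_or_ge (t + (l.length + 1)) (n + 1) with h | h
      · rw [hs_def, Nat.mod_eq_of_lt h]; omega
      · rw [hs_def, Nat.mod_eq_sub_mod h, Nat.mod_eq_of_lt (by omega)]; omega
    rw [shuffleWord_append_singleton, Equiv.Perm.mul_apply, hL.cond hR b _ t ht,
      ih (by omega) (Nat.le_of_lt_succ (Nat.mod_lt _ n.succ_pos)), hs,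
      List.getD_append_singleton_false, hs_top]
    simp only [Nat.odd_add_one, decide_not]
    generalize (w : ℕ).testBit s = x, decide (Odd l.length) = o, l.getD s false = g,
      decide (t = n) = e
    revert x o g e b
    decide

theorem shuffleWord_apply_eq_of_testBit_xor (hL : IsRotateRightXor n L fun t => decide (t ≠ n))
    (hR : IsRotateRightXor n R fun _ => true) {l : List Bool} (hl : l.length = n + 1)
    {u v : Fin (2 ^ (n + 1))}
    (huv : ∀ t ≤ n, ((u : ℕ) ^^^ v).testBit t = (decide (Odd (n + 1)) ^^ l.getD t false)) :
    shuffleWord L R l u = v := by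
  refine Fin.ext (Nat.eq_of_testBit_eq fun t => ?_)
  rcases le_or_gt t n with ht | ht
  · rw [testBit_shuffleWord_apply hL hR hl.le u ht, hl, Nat.add_mod_right,
      Nat.mod_eq_of_lt (Nat.lt_succ_of_le ht), ← huv t ht, Nat.testBit_xor,
      ← Bool.xor_assoc, Bool.xor_self, Bool.false_xor]
  · have hpow : 2 ^ (n + 1) ≤ 2 ^ t := Nat.pow_le_pow_right two_pos ht
    rw [Nat.testBit_lt_two_pow ((Fin.isLt _).trans_le hpow),
      Nat.testBit_lt_two_pow ((Fin.isLt _).trans_le hpow)]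

end ShuffleWord

theorem elmsley_unshuffles_general (k : ℕ)
    (L R : Equiv.Perm (Fin (2 ^ k)))
    (hL : ∀ i : Fin (2 ^ k), (L i : ℕ) =
      (2 ^ (k - 1) * (i : ℕ) + (2 ^ (k - 1) - 1)) % (2 ^ k + 1))
    (hR : ∀ i : Fin (2 ^ k), (R i : ℕ) =
      if (i : ℕ) = 0 then 2 ^ k - 1
      else ((2 ^ (k - 1) - 1) * (i : ℕ)) % (2 ^ k - 1))
    (i j : Fin (2 ^ k))
    (S : Fin k → Equiv.Perm (Fin (2 ^ k)))
    (hS : ∀ r : Fin k, S r =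
      if Odd k then
        (if Nat.testBit ((i : ℕ) ^^^ (j : ℕ)) (r : ℕ) then R else L)
      else
        (if Nat.testBit ((i : ℕ) ^^^ (j : ℕ)) (r : ℕ) then L else R)) :
    ((List.ofFn S).reverse.prod) i = j ∧ ((List.ofFn S).reverse.prod) j = i := by
  cases k with
  | zero => exact ⟨Subsingleton.elim (α := Fin 1) _ _, Subsingleton.elim (α := Fin 1) _ _⟩
  | succ n =>
    simp only [Nat.add_sub_cancel] at hL hR
    have hL' := isRotateRightXor_of_eq_mod hL
    have hR' := isRotateRightXor_of_eq_ite_mod hR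
    set x := (i : ℕ) ^^^ (j : ℕ)
    set l := List.ofFn fun r : Fin (n + 1) => x.testBit r ^^ decide (Odd (n + 1))
    have hword : (List.ofFn S).reverse.prod = shuffleWord L R l := by
      have hS' : S = (fun b => bif b then L else R) ∘
          fun r : Fin (n + 1) => x.testBit r ^^ decide (Odd (n + 1)) := by
        funext r
        rw [hS r]
        by_cases hodd : Odd (n + 1) <;> cases hb : x.testBit r <;> simp [hodd, hb]
      rw [shuffleWord, List.map_ofFn, hS']
    have hmask : ∀ t ≤ n, (decide (Odd (n + 1)) ^^ l.getD t false) = x.testBit t := by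
      intro t ht
      rw [List.getD_eq_getElem _ _ (by simp [l]; omega), List.getElem_ofFn, Bool.xor_comm,
        Bool.xor_assoc, Bool.xor_self, Bool.xor_false]
    have hl : l.length = n + 1 := List.length_ofFn
    rw [hword]
    exact ⟨shuffleWord_apply_eq_of_testBit_xor hL' hR' hl fun t ht => (hmask t ht).symm,
      shuffleWord_apply_eq_of_testBit_xor hL' hR' hl fun t ht => by
        rw [Nat.xor_comm, ← hmask t ht]⟩

/-- Elmsley's problem with unshuffles on `2^k` cards: let `x = i XOR j` have
binary digits `x_{k-1} … x_0` and define `S_r = L` or `R` according to the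
digit `x_r` and the parity of `k`.  Then the composite
`S_{k-1} ∘ ⋯ ∘ S_1 ∘ S_0` swaps the cards in positions `i` and `j`. -/
theorem elmsley_unshuffles (k : ℕ) (hk : 1 ≤ k)
    (L R : Equiv.Perm (Fin (2 ^ k)))
    (hL : ∀ i : Fin (2 ^ k), (L i : ℕ) =
      (2 ^ (k - 1) * (i : ℕ) + (2 ^ (k - 1) - 1)) % (2 ^ k + 1))
    (hR : ∀ i : Fin (2 ^ k), (R i : ℕ) =
      if (i : ℕ) = 0 then 2 ^ k - 1
      else ((2 ^ (k - 1) - 1) * (i : ℕ)) % (2 ^ k - 1))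
    (i j : Fin (2 ^ k))
    (S : Fin k → Equiv.Perm (Fin (2 ^ k)))
    (hS : ∀ r : Fin k, S r =
      if Odd k then
        (if Nat.testBit ((i : ℕ) ^^^ (j : ℕ)) (r : ℕ) then R else L)
      else
        (if Nat.testBit ((i : ℕ) ^^^ (j : ℕ)) (r : ℕ) then L else R)) :
    ((List.ofFn S).reverse.prod) i = j ∧ ((List.ofFn S).reverse.prod) j = i :=
  elmsley_unshuffles_general k L R hL hR i j S hS
end

section
/- On a deck of 2n = 2^k cards, V = I^k, where I is the in-shuffle and V is the deck reversal. -/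
/-- On a deck of `2^k` cards, `V = I^k`, where `I` is the in-shuffle and `V`
is the deck reversal. -/
theorem reversal_eq_in_shuffle_pow (k : ℕ) (hk : 1 ≤ k)
    (I V : Equiv.Perm (Fin (2 ^ k)))
    (hI : ∀ i : Fin (2 ^ k), (I i : ℕ) = (2 * (i : ℕ) + 1) % (2 ^ k + 1))
    (hV : ∀ i : Fin (2 ^ k), (V i : ℕ) = 2 ^ k - 1 - (i : ℕ)) :
    V = I ^ k := by
  set N := 2 ^ k + 1 with hN
  have key : ∀ (r : ℕ) (i : Fin (2 ^ k)),
      (((I ^ r) i : ℕ) + 1) % N = (2 ^ r * ((i : ℕ) + 1)) % N := by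
    intro r
    induction r with
    | zero =>
      intro i
      simp
    | succ r ih =>
      intro i
      have h1 : (I ^ (r + 1)) i = I ((I ^ r) i) := by
        rw [pow_succ', Equiv.Perm.mul_apply]
      set j := (I ^ r) i with hj
      have hjlt : (j : ℕ) < 2 ^ k := j.isLt
      have h2 : ((I j : ℕ) + 1) % N = (2 * ((j : ℕ) + 1)) % N := by
        rw [hI j, show 2 * ((j : ℕ) + 1) = (2 * (j : ℕ) + 1) + 1 by ring]
        exact (Nat.mod_modEq (2 * (j : ℕ) + 1) N).add_right 1
      rw [h1, h2]
      have h3 : (2 * ((j : ℕ) + 1)) % N = (2 * (2 ^ r * ((i : ℕ) + 1))) % N :=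
        Nat.ModEq.mul_left 2 (ih i)
      rw [h3]
      congr 1
      rw [pow_succ]
      ring
  apply Equiv.ext
  intro i
  have hkey := key k i
  have hilt : (i : ℕ) < 2 ^ k := i.isLt
  have hvlt : (((I ^ k) i : ℕ)) < 2 ^ k := ((I ^ k) i).isLt
  have hmod1 : (((I ^ k) i : ℕ) + 1) % N = ((I ^ k) i : ℕ) + 1 :=
    Nat.mod_eq_of_lt (by omega)
  have hmod2 : (2 ^ k * ((i : ℕ) + 1)) % N = 2 ^ k - (i : ℕ) := by
    have heq : 2 ^ k * ((i : ℕ) + 1) = N * (i : ℕ) + (2 ^ k - (i : ℕ)) := by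
      rw [hN]; ring_nf; omega
    rw [heq, Nat.mul_add_mod]
    exact Nat.mod_eq_of_lt (by omega)
  have : ((I ^ k) i : ℕ) = 2 ^ k - 1 - (i : ℕ) := by
    rw [hmod1, hmod2] at hkey
    omega
  apply Fin.ext
  rw [hV i, this]
end

section
/- On a deck of 2n = 2^k cards with k even, V = L^k, where L is the left shuffle and V the deck reversal. -/
/-- On a deck of `2^k` cards with `k` even, `V = L^k`, where `L` is the left
shuffle and `V` the deck reversal. -/
theorem reversal_eq_left_shuffle_pow (k : ℕ) (hk : 1 ≤ k) (hke : Even k)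
    (L V : Equiv.Perm (Fin (2 ^ k)))
    (hL : ∀ i : Fin (2 ^ k), (L i : ℕ) =
      (2 ^ (k - 1) * (i : ℕ) + (2 ^ (k - 1) - 1)) % (2 ^ k + 1))
    (hV : ∀ i : Fin (2 ^ k), (V i : ℕ) = 2 ^ k - 1 - (i : ℕ)) :
    V = L ^ k := by
  set N : ℕ := 2 ^ k + 1 with hN
  have h1 : 1 ≤ 2 ^ (k - 1) := Nat.one_le_two_pow
  -- L in ZMod N
  have hLz : ∀ i : Fin (2 ^ k),
      (((L i : ℕ) + 1 : ℕ) : ZMod N) = 2 ^ (k - 1) * ((i : ℕ) + 1) := by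
    intro i
    have : (L i : ℕ) + 1 = (2 ^ (k - 1) * (i : ℕ) + (2 ^ (k - 1) - 1)) % N + 1 := by
      rw [hL i]
    rw [this]
    push_cast [ZMod.natCast_mod]
    have h2 : ((2 ^ (k - 1) - 1 : ℕ) : ZMod N) = (2 : ZMod N) ^ (k - 1) - 1 := by
      have := Nat.cast_sub (R := ZMod N) h1
      push_cast at this ⊢
      rw [this]
    rw [h2]
    ring
  -- iterate
  have hpow : ∀ (m : ℕ) (i : Fin (2 ^ k)),
      ((((L ^ m) i : ℕ) + 1 : ℕ) : ZMod N) = 2 ^ ((k - 1) * m) * ((i : ℕ) + 1) := by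
    intro m
    induction m with
    | zero => intro i; simp
    | succ m ih =>
      intro i
      have happ : (L ^ (m + 1)) i = (L ^ m) (L i) := by
        rw [pow_succ, Equiv.Perm.mul_apply]
      rw [happ, ih (L i)]
      have := hLz i
      push_cast at this ⊢
      rw [this, Nat.mul_succ, pow_add]
      ring
  have h2k : ((2 : ZMod N)) ^ k = -1 := by
    have : ((2 ^ k + 1 : ℕ) : ZMod N) = 0 := by rw [hN]; exact ZMod.natCast_self N
    push_cast at this
    linear_combination this
  have hodd : Odd (k - 1) := by
    rcases hke with ⟨m, hm⟩
    refine ⟨m - 1, by omega⟩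
  ext i
  have hlt : ∀ j : Fin (2 ^ k), (j : ℕ) < N := fun j => by
    have := j.isLt; omega
  -- both sides +1 agree in ZMod N
  have hV1 : (((V i : ℕ) + 1 : ℕ) : ZMod N) = -(((i : ℕ) : ZMod N) + 1) := by
    have hi : (i : ℕ) ≤ 2 ^ k := le_of_lt i.isLt
    have : (V i : ℕ) + 1 = 2 ^ k - (i : ℕ) := by
      have := hV i; have := i.isLt; omega
    rw [this, Nat.cast_sub hi]
    push_cast
    have : ((2 : ZMod N)) ^ k = -1 := h2k
    rw [this]; ring
  have hL1 : ((((L ^ k) i : ℕ) + 1 : ℕ) : ZMod N) = -(((i : ℕ) : ZMod N) + 1) := by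
    rw [hpow k i]
    have : (2 : ZMod N) ^ ((k - 1) * k) = -1 := by
      rw [mul_comm, pow_mul, h2k, Odd.neg_one_pow hodd]
    rw [this]; ring
  have heq : (((V i : ℕ) : ZMod N)) = (((L ^ k) i : ℕ) : ZMod N) := by
    have h := hV1.trans hL1.symm
    rw [Nat.cast_add, Nat.cast_add, Nat.cast_one] at h
    exact add_right_cancel h
  have h2 := congrArg ZMod.val heq
  rw [ZMod.val_natCast_of_lt (hlt _), ZMod.val_natCast_of_lt (hlt _)] at h2
  exact h2
end

section
/- On a deck of 2n = 2^k cards with k odd, V = R^k, where R is the right shuffle and V the deck reversal. -/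
/-- On a deck of `2^k` cards with `k` odd, `V = R^k`, where `R` is the right
shuffle and `V` the deck reversal. -/
theorem reversal_eq_right_shuffle_pow (k : ℕ) (hk : 1 ≤ k) (hko : Odd k)
    (R V : Equiv.Perm (Fin (2 ^ k)))
    (hR : ∀ i : Fin (2 ^ k), (R i : ℕ) =
      if (i : ℕ) = 0 then 2 ^ k - 1
      else ((2 ^ (k - 1) - 1) * (i : ℕ)) % (2 ^ k - 1))
    (hV : ∀ i : Fin (2 ^ k), (V i : ℕ) = 2 ^ k - 1 - (i : ℕ)) :
    V = R ^ k := by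
  set m := 2 ^ k - 1 with hm
  set c := 2 ^ (k - 1) - 1 with hc
  have h2k : 2 ^ k = m + 1 := by
    have : 1 ≤ 2 ^ k := Nat.one_le_two_pow
    omega
  have hm1 : 1 ≤ m := by
    have : 2 ^ 1 ≤ 2 ^ k := Nat.pow_le_pow_right (by norm_num) hk
    simp at this; omega
  have hc2 : c * 2 = m - 1 := by
    have h : 2 ^ (k - 1) * 2 = 2 ^ k := by
      rw [← pow_succ]; congr 1; omega
    have h1 : 1 ≤ 2 ^ (k - 1) := Nat.one_le_two_pow
    omega
  have hcop : Nat.Coprime c m := by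
    have h1 : Nat.gcd c m ∣ m - 1 := hc2 ▸ (Nat.gcd_dvd_left c m).mul_right 2
    have h2 : Nat.gcd c m ∣ m := Nat.gcd_dvd_right c m
    have h3 : Nat.gcd c m ∣ m - (m - 1) := Nat.dvd_sub h2 h1
    have h4 : m - (m - 1) = 1 := by omega
    exact Nat.dvd_one.mp (h4 ▸ h3)
  have hmodpos : ∀ (a i : ℕ), Nat.Coprime a m → 0 < i → i < m → 0 < a * i % m := by
    intro a i hca h0 h1
    rcases Nat.eq_zero_or_pos (a * i % m) with h | h
    · exfalso
      have hd : m ∣ a * i := Nat.dvd_of_mod_eq_zero h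
      have hi : m ∣ i := hca.symm.dvd_of_dvd_mul_left hd
      have := Nat.le_of_dvd h0 hi
      omega
    · exact h
  -- iteration on middle cards
  have iter : ∀ (j : ℕ) (i : Fin (2 ^ k)), 0 < (i : ℕ) → (i : ℕ) < m →
      ((R ^ j) i : ℕ) = c ^ j * (i : ℕ) % m := by
    intro j
    induction j with
    | zero => intro i h0 h1; simp [Nat.mod_eq_of_lt h1]
    | succ j ih =>
      intro i h0 h1
      have hy := ih i h0 h1
      have hy0 : 0 < ((R ^ j) i : ℕ) := by
        rw [hy]; exact hmodpos _ _ (Nat.Coprime.pow_left j hcop) h0 h1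
      have hy1 : ((R ^ j) i : ℕ) < m := by
        rw [hy]; exact Nat.mod_lt _ (by omega)
      have hstep : ((R ^ (j + 1)) i) = R ((R ^ j) i) := by
        rw [pow_succ', Equiv.Perm.mul_apply]
      rw [hstep, hR, if_neg (by omega), hy, pow_succ', mul_assoc,
        Nat.mul_mod, Nat.mod_mod, ← Nat.mul_mod]
  -- c ^ k ≡ -1 (mod m)
  have hck : ∀ i : ℕ, 0 < i → i < m → c ^ k * i % m = m - i := by
    intro i h0 h1
    haveI : NeZero m := ⟨by omega⟩
    have hc2' : ((c : ZMod m) * 2) = -1 := by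
      have : ((c * 2 : ℕ) : ZMod m) = ((m - 1 : ℕ) : ZMod m) := by rw [hc2]
      push_cast [Nat.cast_sub hm1] at this
      simpa [ZMod.natCast_self] using this
    have h2k' : ((2 : ZMod m)) ^ k = 1 := by
      have : ((2 ^ k : ℕ) : ZMod m) = ((m + 1 : ℕ) : ZMod m) := by rw [h2k]
      push_cast at this
      simpa [ZMod.natCast_self] using this
    have hckz : ((c : ZMod m)) ^ k = -1 := by
      have h := congrArg (· ^ k) hc2'
      simp only [mul_pow] at h
      rw [h2k', mul_one] at h
      simpa [hko.neg_one_pow] using h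
    have hcast : ((c ^ k * i % m : ℕ) : ZMod m) = ((m - i : ℕ) : ZMod m) := by
      rw [ZMod.natCast_mod]
      push_cast [Nat.cast_sub (le_of_lt h1)]
      rw [hckz]
      simp [ZMod.natCast_self]
    have hl : c ^ k * i % m < m := Nat.mod_lt _ (by omega)
    have hr : m - i < m := by omega
    have := congrArg ZMod.val hcast
    rwa [ZMod.val_cast_of_lt hl, ZMod.val_cast_of_lt hr] at this
  -- endpoints
  have hmfin : m < 2 ^ k := by omega
  have h0fin : (0 : ℕ) < 2 ^ k := by omega
  have hR0 : R ⟨0, h0fin⟩ = ⟨m, hmfin⟩ := by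
    apply Fin.ext
    rw [hR]
    simp
  have hRm : R ⟨m, hmfin⟩ = ⟨0, h0fin⟩ := by
    apply Fin.ext
    rw [hR, if_neg (by simp only [Fin.val_mk]; omega)]
    simp [Nat.mul_mod_left]
  have hsq0 : (R ^ 2) ⟨0, h0fin⟩ = ⟨0, h0fin⟩ := by
    rw [pow_two, Equiv.Perm.mul_apply, hR0, hRm]
  have hsqm : (R ^ 2) ⟨m, hmfin⟩ = ⟨m, hmfin⟩ := by
    rw [pow_two, Equiv.Perm.mul_apply, hRm, hR0]
  have hsq0' : ∀ t, ((R ^ 2) ^ t) ⟨0, h0fin⟩ = ⟨0, h0fin⟩ := by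
    intro t; induction t with
    | zero => rfl
    | succ t ih => rw [pow_succ, Equiv.Perm.mul_apply, hsq0, ih]
  have hsqm' : ∀ t, ((R ^ 2) ^ t) ⟨m, hmfin⟩ = ⟨m, hmfin⟩ := by
    intro t; induction t with
    | zero => rfl
    | succ t ih => rw [pow_succ, Equiv.Perm.mul_apply, hsqm, ih]
  obtain ⟨t, ht⟩ := hko
  have hpow : R ^ k = R ^ (2 * t) * R := by
    rw [congrArg (fun n => R ^ n) ht, pow_succ]
  have hRk0 : (R ^ k) ⟨0, h0fin⟩ = ⟨m, hmfin⟩ := by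
    rw [hpow, Equiv.Perm.mul_apply, hR0, pow_mul, hsqm']
  have hRkm : (R ^ k) ⟨m, hmfin⟩ = ⟨0, h0fin⟩ := by
    rw [hpow, Equiv.Perm.mul_apply, hRm, pow_mul, hsq0']
  -- assemble
  ext i
  have hib : (i : ℕ) < 2 ^ k := i.isLt
  rcases Nat.eq_zero_or_pos (i : ℕ) with h0 | h0
  · have hi : i = ⟨0, h0fin⟩ := Fin.ext h0
    rw [hi, hRk0, hV]
    simp
  · rcases Nat.lt_or_ge (i : ℕ) m with h1 | h1
    · rw [hV, iter k i h0 h1, hck _ h0 h1]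
    · have him : (i : ℕ) = m := by omega
      have hi : i = ⟨m, hmfin⟩ := Fin.ext him
      rw [hi, hRkm, hV]
      simp
end

section
/- On a deck of 2^k cards, the group generated by the left and right shuffles equals the group generated by the in-shuffle and out-shuffle. -/
private lemma mod_two_mul_aux (x m : ℕ) (h : x < 2 * m) :
    x % m = if x < m then x else x - m := by
  split_ifs with h'
  · exact Nat.mod_eq_of_lt h'
  · rw [Nat.mod_eq_sub_mod (le_of_not_gt h'), Nat.mod_eq_of_lt (by omega)]

private lemma key_aux1 (n x : ℕ) (hx : x < n) :
    n * (x + 1) + n = (n - 1 - x) + (x + 1) * (n + 1) := by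
  obtain ⟨c, hc⟩ := Nat.exists_eq_add_of_le (show x + 1 ≤ n by omega)
  subst hc
  have h1 : x + 1 + c - 1 - x = c := by omega
  rw [h1]; ring

private lemma key_aux2 (n x : ℕ) (h1 : 1 ≤ n) :
    n * x = x + x * (n - 1) := by
  obtain ⟨c, hc⟩ := Nat.exists_eq_add_of_le h1
  subst hc
  have h2 : 1 + c - 1 = c := by omega
  rw [h2]; ring

/-- On a deck of `2^k` cards, the group generated by the left and right
shuffles equals the group generated by the in-shuffle and the out-shuffle. -/
theorem unshuffle_group_eq_perfect_shuffle_group_pow_two (k : ℕ) (hk : 1 ≤ k)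
    (L R I O V : Equiv.Perm (Fin (2 ^ k)))
    (hI : ∀ i : Fin (2 ^ k), (I i : ℕ) = (2 * (i : ℕ) + 1) % (2 ^ k + 1))
    (hO : ∀ i : Fin (2 ^ k), (O i : ℕ) =
      if (i : ℕ) = 2 ^ k - 1 then 2 ^ k - 1 else (2 * (i : ℕ)) % (2 ^ k - 1))
    (hV : ∀ i : Fin (2 ^ k), (V i : ℕ) = 2 ^ k - 1 - (i : ℕ))
    (hL : L = V * I⁻¹) (hR : R = V * O⁻¹) :
    Subgroup.closure {L, R} = Subgroup.closure {I, O} := by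
  have hn2 : 2 ≤ 2 ^ k := by
    calc 2 = 2 ^ 1 := (pow_one 2).symm
    _ ≤ 2 ^ k := Nat.pow_le_pow_right (by norm_num) hk
  -- iterates of the in-shuffle
  have hIpow : ∀ j : ℕ, ∀ i : Fin (2 ^ k),
      (((I ^ j) i : ℕ)) = (2 ^ j * ((i : ℕ) + 1) + 2 ^ k) % (2 ^ k + 1) := by
    intro j
    induction j with
    | zero =>
      intro i
      have hi : (i : ℕ) < 2 ^ k := i.isLt
      have h1 : ((I ^ 0) i : ℕ) = (i : ℕ) := by rw [pow_zero]; rfl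
      have h2 : (2 ^ 0 * ((i : ℕ) + 1) + 2 ^ k) = (i : ℕ) + (2 ^ k + 1) := by
        rw [pow_zero]; ring
      rw [h1, h2, Nat.add_mod_right, Nat.mod_eq_of_lt (by omega)]
    | succ j ih =>
      intro i
      have hstep : (I ^ (j + 1)) i = I ((I ^ j) i) := by
        rw [pow_succ', Equiv.Perm.mul_apply]
      rw [hstep, hI, ih]
      have hme : (2 * ((2 ^ j * ((i : ℕ) + 1) + 2 ^ k) % (2 ^ k + 1)) + 1) % (2 ^ k + 1)
          = (2 * (2 ^ j * ((i : ℕ) + 1) + 2 ^ k) + 1) % (2 ^ k + 1) :=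
        ((Nat.mod_modEq _ _).mul_left 2).add_right 1
      rw [hme]
      have h3 : 2 * (2 ^ j * ((i : ℕ) + 1) + 2 ^ k) + 1
          = 2 ^ (j + 1) * ((i : ℕ) + 1) + 2 ^ k + (2 ^ k + 1) := by
        rw [pow_succ]; ring
      rw [h3, Nat.add_mod_right]
  -- V = I ^ k
  have hIV : I ^ k = V := by
    apply Equiv.ext
    intro i
    apply Fin.ext
    rw [hIpow k i, hV]
    have hi : (i : ℕ) < 2 ^ k := i.isLt
    rw [key_aux1 (2 ^ k) (i : ℕ) hi, Nat.add_mul_mod_self_right,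
      Nat.mod_eq_of_lt (by omega)]
  -- iterates of the out-shuffle
  have hOpow : ∀ j : ℕ, ∀ i : Fin (2 ^ k),
      (((O ^ j) i : ℕ)) = if (i : ℕ) = 2 ^ k - 1 then 2 ^ k - 1
        else (2 ^ j * (i : ℕ)) % (2 ^ k - 1) := by
    intro j
    induction j with
    | zero =>
      intro i
      have h1 : ((O ^ 0) i : ℕ) = (i : ℕ) := by rw [pow_zero]; rfl
      rw [h1, pow_zero, one_mul]
      split_ifs with h
      · exact h
      · exact (Nat.mod_eq_of_lt (by have := i.isLt; omega)).symm
    | succ j ih =>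
      intro i
      have hstep : (O ^ (j + 1)) i = O ((O ^ j) i) := by
        rw [pow_succ', Equiv.Perm.mul_apply]
      rw [hstep, hO, ih i]
      by_cases h : (i : ℕ) = 2 ^ k - 1
      · rw [if_pos h, if_pos rfl, if_pos h]
      · have hm1 : 1 ≤ 2 ^ k - 1 := by omega
        have hlt : (2 ^ j * (i : ℕ)) % (2 ^ k - 1) < 2 ^ k - 1 :=
          Nat.mod_lt _ (by omega)
        rw [if_neg h, if_neg (Nat.ne_of_lt hlt), if_neg h]
        have hme : (2 * ((2 ^ j * (i : ℕ)) % (2 ^ k - 1))) % (2 ^ k - 1)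
            = (2 * (2 ^ j * (i : ℕ))) % (2 ^ k - 1) :=
          (Nat.mod_modEq _ _).mul_left 2
        rw [hme]
        congr 1
        rw [pow_succ]; ring
  -- O ^ k = 1
  have hO1 : O ^ k = 1 := by
    apply Equiv.ext
    intro i
    apply Fin.ext
    have h1 : ((1 : Equiv.Perm (Fin (2 ^ k))) i : ℕ) = (i : ℕ) := rfl
    rw [hOpow k i, h1]
    split_ifs with h
    · omega
    · have hi : (i : ℕ) < 2 ^ k - 1 := by have := i.isLt; omega
      rw [key_aux2 (2 ^ k) (i : ℕ) (by omega), Nat.add_mul_mod_self_right,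
        Nat.mod_eq_of_lt hi]
  -- V is an involution
  have hVV : V * V = 1 := by
    apply Equiv.ext
    intro i
    apply Fin.ext
    have h1 : ((1 : Equiv.Perm (Fin (2 ^ k))) i : ℕ) = (i : ℕ) := rfl
    rw [Equiv.Perm.mul_apply, hV, hV, h1]
    have hi : (i : ℕ) < 2 ^ k := i.isLt
    omega
  -- V commutes with O
  have hVO : Commute V O := by
    show V * O = O * V
    apply Equiv.ext
    intro i
    apply Fin.ext
    rw [Equiv.Perm.mul_apply, Equiv.Perm.mul_apply, hV, hO, hO (V i), hV]
    have hi : (i : ℕ) < 2 ^ k := i.isLt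
    have hodd : (2 ^ k - 1) % 2 = 1 := by
      have h2 : (2 : ℕ) ∣ 2 ^ k := dvd_pow_self 2 (by omega)
      omega
    by_cases h0 : (i : ℕ) = 0
    · rw [if_neg (by omega), if_pos (by omega)]
      have h2 : 2 * (i : ℕ) % (2 ^ k - 1) = 0 := by rw [h0]; simp
      omega
    · by_cases hm : (i : ℕ) = 2 ^ k - 1
      · rw [if_pos hm, if_neg (by omega)]
        have h2 : 2 ^ k - 1 - (i : ℕ) = 0 := by omega
        rw [h2]
        simp
      · rw [if_neg hm, if_neg (by omega)]
        have e1 := mod_two_mul_aux (2 * (i : ℕ)) (2 ^ k - 1) (by omega)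
        have e2 := mod_two_mul_aux (2 * (2 ^ k - 1 - (i : ℕ))) (2 ^ k - 1) (by omega)
        rw [e1, e2]
        split_ifs <;> omega
  -- V commutes with I
  have hVI : Commute V I := hIV ▸ (Commute.refl I).pow_left k
  -- L = I ^ (k - 1)
  have hks : k - 1 + 1 = k := by omega
  have hIk' : I ^ (k - 1) * I = I ^ k := by rw [← pow_succ, hks]
  have hL' : L = I ^ (k - 1) := by
    rw [hL, ← hIV, ← hIk', mul_inv_cancel_right]
  -- membership facts
  have memI : I ∈ Subgroup.closure ({I, O} : Set (Equiv.Perm (Fin (2 ^ k)))) :=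
    Subgroup.subset_closure (Set.mem_insert _ _)
  have memO : O ∈ Subgroup.closure ({I, O} : Set (Equiv.Perm (Fin (2 ^ k)))) :=
    Subgroup.subset_closure (Set.mem_insert_of_mem _ rfl)
  have memL : L ∈ Subgroup.closure ({L, R} : Set (Equiv.Perm (Fin (2 ^ k)))) :=
    Subgroup.subset_closure (Set.mem_insert _ _)
  have memR : R ∈ Subgroup.closure ({L, R} : Set (Equiv.Perm (Fin (2 ^ k)))) :=
    Subgroup.subset_closure (Set.mem_insert_of_mem _ rfl)
  -- V ∈ ⟨L, R⟩
  have hVsq : V ^ 2 = 1 := by rw [pow_two]; exact hVV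
  have memV : V ∈ Subgroup.closure ({L, R} : Set (Equiv.Perm (Fin (2 ^ k)))) := by
    rcases Nat.even_or_odd k with he | ho
    · obtain ⟨m, hm⟩ := he
      have hm' : k = 2 * m := by omega
      have hVinv : V⁻¹ = V := inv_eq_of_mul_eq_one_right hVV
      have hVk1 : V ^ k = 1 := by
        have h4 : V ^ k = (V ^ 2) ^ m := by rw [← pow_mul, ← hm']
        rw [h4, hVsq, one_pow]
      have hLk : L ^ k = V := by
        rw [hL, hVI.inv_right.mul_pow, hVk1, one_mul, inv_pow, hIV, hVinv]
      rw [← hLk]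
      exact pow_mem memL k
    · obtain ⟨m, hm⟩ := ho
      have h3 : (V ^ 2) ^ m * V = V ^ k := by rw [← pow_mul, ← pow_succ, ← hm]
      have hRk : R ^ k = V := by
        rw [hR, hVO.inv_right.mul_pow, inv_pow, hO1, inv_one, mul_one, ← h3,
          hVsq, one_pow, one_mul]
      rw [← hRk]
      exact pow_mem memR k
  -- conclude
  apply le_antisymm
  · rw [Subgroup.closure_le]
    intro x hx
    rcases hx with rfl | hx
    · exact SetLike.mem_coe.mpr (hL' ▸ pow_mem memI (k - 1))
    · rcases hx with rfl
      exact SetLike.mem_coe.mpr (hR ▸ mul_mem (hIV ▸ pow_mem memI k) (inv_mem memO))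
  · rw [Subgroup.closure_le]
    intro x hx
    have hImem : I ∈ Subgroup.closure ({L, R} : Set (Equiv.Perm (Fin (2 ^ k)))) := by
      have h5 : I = L⁻¹ * V := by rw [hL]; group
      rw [h5]
      exact mul_mem (inv_mem memL) memV
    have hOmem : O ∈ Subgroup.closure ({L, R} : Set (Equiv.Perm (Fin (2 ^ k)))) := by
      have h5 : O = R⁻¹ * V := by rw [hR]; group
      rw [h5]
      exact mul_mem (inv_mem memR) memV
    rcases hx with rfl | hx
    · exact SetLike.mem_coe.mpr hImem
    · rcases hx with rfl
      exact SetLike.mem_coe.mpr hOmem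
end

section
/- The sign of the left shuffle L on 2n cards is +1 if n ≡ 0 or 1 (mod 4) and -1 if n ≡ 2 or 3 (mod 4); the sign of the right shuffle R is +1 if n ≡ 0 or 3 (mod 4) and -1 if n ≡ 1 or 2 (mod 4). -/
open Finset Equiv Equiv.Perm

private lemma my_sign_eq_signAux {m : ℕ} (f : Equiv.Perm (Fin m)) :
    Equiv.Perm.sign f = Equiv.Perm.signAux f := by
  refine Equiv.Perm.swap_induction_on f ?_ ?_
  · rw [map_one, Equiv.Perm.signAux_one]
  · intro f x y hxy ih
    rw [map_mul, Equiv.Perm.signAux_mul, Equiv.Perm.sign_swap hxy,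
      Equiv.Perm.signAux_swap hxy, ih]

private lemma my_prod_attachFin {M : Type*} [CommMonoid M] {m : ℕ} (s : Finset ℕ)
    (h : ∀ x ∈ s, x < m) (g : ℕ → M) :
    ∏ x ∈ s.attachFin h, g (x : ℕ) = ∏ x ∈ s, g x := by
  refine Finset.prod_nbij (fun a => (a : ℕ)) ?_ ?_ ?_ ?_
  · intro a ha; simpa using ha
  · intro a _ b _ hab; exact Fin.val_injective hab
  · intro x hx
    exact ⟨⟨x, h x hx⟩, by simpa using hx, rfl⟩
  · intro a _; rfl

private lemma my_prod_even (k : ℕ) :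
    (∏ j ∈ Finset.range (2 * k), (if j % 2 = 1 then (-1 : ℤˣ) else 1)) = (-1) ^ k := by
  induction k with
  | zero => simp
  | succ k ih =>
    rw [show 2 * (k + 1) = (2 * k + 1) + 1 by ring, Finset.prod_range_succ,
      Finset.prod_range_succ, ih, if_neg (by omega), if_pos (by omega), pow_succ, mul_one]

private lemma my_prod_odd (k : ℕ) :
    (∏ j ∈ Finset.range (2 * k + 1), (if j % 2 = 1 then (-1 : ℤˣ) else 1)) = (-1) ^ k := by
  rw [Finset.prod_range_succ, my_prod_even, if_neg (by omega), mul_one]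

private lemma my_prod_even' (k : ℕ) :
    (∏ j ∈ Finset.range (2 * k), (if j % 2 = 1 then (1 : ℤˣ) else -1)) = (-1) ^ k := by
  induction k with
  | zero => simp
  | succ k ih =>
    rw [show 2 * (k + 1) = (2 * k + 1) + 1 by ring, Finset.prod_range_succ,
      Finset.prod_range_succ, ih, if_neg (by omega), if_pos (by omega), pow_succ, mul_one]

private def cL (i : ℕ) : ℤˣ :=
  ∏ j ∈ Finset.range i, (if i % 2 = 0 ∨ j % 2 = 1 then (-1 : ℤˣ) else 1)

private def cR (i : ℕ) : ℤˣ :=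
  ∏ j ∈ Finset.range i, (if i % 2 = 1 ∨ j % 2 = 0 then (-1 : ℤˣ) else 1)

private lemma cL_even (b : ℕ) : cL (2 * b) = 1 := by
  unfold cL
  rw [Finset.prod_congr rfl (fun j _ => if_pos (Or.inl (by omega))),
    Finset.prod_const, Finset.card_range, pow_mul]
  norm_num

private lemma cL_odd (b : ℕ) : cL (2 * b + 1) = (-1) ^ b := by
  unfold cL
  rw [Finset.prod_congr rfl (fun j _ =>
    if_congr (by omega : ((2 * b + 1) % 2 = 0 ∨ j % 2 = 1) ↔ j % 2 = 1) rfl rfl),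
    my_prod_odd]

private lemma cR_even (b : ℕ) : cR (2 * b) = (-1) ^ b := by
  unfold cR
  rw [← my_prod_even' b]
  refine Finset.prod_congr rfl (fun j _ => ?_)
  by_cases hj : j % 2 = 1
  · rw [if_neg (by omega), if_pos hj]
  · rw [if_pos (Or.inr (by omega)), if_neg hj]

private lemma cR_odd (b : ℕ) : cR (2 * b + 1) = -(-1) ^ (2 * b) := by
  unfold cR
  rw [Finset.prod_congr rfl (fun j _ => if_pos (Or.inl (by omega))),
    Finset.prod_const, Finset.card_range, pow_succ, mul_neg_one]

private lemma AL (n : ℕ) :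
    (∏ i ∈ Finset.range (2 * n), cL i) = if n % 4 = 0 ∨ n % 4 = 1 then 1 else -1 := by
  induction n with
  | zero => simp
  | succ n ih =>
    rw [show 2 * (n + 1) = (2 * n + 1) + 1 by ring, Finset.prod_range_succ,
      Finset.prod_range_succ, ih, cL_even, cL_odd]
    have h4 : n % 4 = 0 ∨ n % 4 = 1 ∨ n % 4 = 2 ∨ n % 4 = 3 := by omega
    rcases h4 with h | h | h | h
    · rw [(Nat.even_iff.2 (by omega) : Even n).neg_one_pow,
        if_pos (Or.inl h), if_pos (by omega)]; norm_num
    · rw [(Nat.odd_iff.2 (by omega) : Odd n).neg_one_pow,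
        if_pos (Or.inr h), if_neg (by omega)]; norm_num
    · rw [(Nat.even_iff.2 (by omega) : Even n).neg_one_pow,
        if_neg (by omega), if_neg (by omega)]; norm_num
    · rw [(Nat.odd_iff.2 (by omega) : Odd n).neg_one_pow,
        if_neg (by omega), if_pos (by omega)]; norm_num

private lemma AR (n : ℕ) :
    (∏ i ∈ Finset.range (2 * n), cR i) = if n % 4 = 0 ∨ n % 4 = 3 then 1 else -1 := by
  induction n with
  | zero => simp
  | succ n ih =>
    rw [show 2 * (n + 1) = (2 * n + 1) + 1 by ring, Finset.prod_range_succ,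
      Finset.prod_range_succ, ih, cR_even, cR_odd]
    have h4 : n % 4 = 0 ∨ n % 4 = 1 ∨ n % 4 = 2 ∨ n % 4 = 3 := by omega
    rcases h4 with h | h | h | h
    · rw [(Nat.even_iff.2 (by omega) : Even n).neg_one_pow,
        (Nat.even_iff.2 (by omega) : Even (2 * n)).neg_one_pow,
        if_pos (Or.inl h), if_neg (by omega)]; norm_num
    · rw [(Nat.odd_iff.2 (by omega) : Odd n).neg_one_pow,
        (Nat.even_iff.2 (by omega) : Even (2 * n)).neg_one_pow,
        if_neg (by omega), if_neg (by omega)]; norm_num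
    · rw [(Nat.even_iff.2 (by omega) : Even n).neg_one_pow,
        (Nat.even_iff.2 (by omega) : Even (2 * n)).neg_one_pow,
        if_neg (by omega), if_pos (by omega)]; norm_num
    · rw [(Nat.odd_iff.2 (by omega) : Odd n).neg_one_pow,
        (Nat.even_iff.2 (by omega) : Even (2 * n)).neg_one_pow,
        if_pos (Or.inr h), if_pos (by omega)]; norm_num

/-- The sign of the left shuffle `L` on `2n` cards is `+1` iff
`n ≡ 0, 1 (mod 4)`, and the sign of the right shuffle `R` is `+1` iff
`n ≡ 0, 3 (mod 4)`. -/
theorem unshuffle_signs (n : ℕ) (hn : 0 < n)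
    (L R : Equiv.Perm (Fin (2 * n)))
    (hL : ∀ i : Fin (2 * n), (L i : ℕ) =
      if 2 ∣ (i : ℕ) then n - 1 - (i : ℕ) / 2 else 2 * n - ((i : ℕ) + 1) / 2)
    (hR : ∀ i : Fin (2 * n), (R i : ℕ) =
      if 2 ∣ (i : ℕ) then 2 * n - 1 - (i : ℕ) / 2 else n - ((i : ℕ) + 1) / 2) :
    (Equiv.Perm.sign L = if n % 4 = 0 ∨ n % 4 = 1 then 1 else -1) ∧
    (Equiv.Perm.sign R = if n % 4 = 0 ∨ n % 4 = 3 then 1 else -1) := by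
  constructor
  · rw [my_sign_eq_signAux]
    unfold Equiv.Perm.signAux Equiv.Perm.finPairsLT
    rw [Finset.prod_sigma]
    have key : ∀ i j : Fin (2 * n), (j : ℕ) < (i : ℕ) →
        ((L i ≤ L j) ↔ ((i : ℕ) % 2 = 0 ∨ (j : ℕ) % 2 = 1)) := by
      intro i j hij
      have h1 := hL i
      have h2 := hL j
      have hi := i.isLt
      have hj := j.isLt
      rw [Fin.le_def, h1, h2]
      split_ifs <;> omega
    calc (∏ i : Fin (2 * n), ∏ j ∈ (Finset.range (i : ℕ)).attachFin
            (fun _ hm => (Finset.mem_range.1 hm).trans i.2),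
            (if L i ≤ L j then (-1 : ℤˣ) else 1))
        = ∏ i : Fin (2 * n), cL (i : ℕ) := by
          refine Finset.prod_congr rfl (fun i _ => ?_)
          rw [Finset.prod_congr rfl (fun j hj => if_congr
            (key i j (Finset.mem_range.1 ((Finset.mem_attachFin _).1 hj))) rfl rfl),
            my_prod_attachFin (Finset.range (i : ℕ)) _
              (fun m => if (i : ℕ) % 2 = 0 ∨ m % 2 = 1 then (-1 : ℤˣ) else 1)]
          rfl
      _ = ∏ i ∈ Finset.range (2 * n), cL i := Fin.prod_univ_eq_prod_range cL (2 * n)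
      _ = _ := AL n
  · rw [my_sign_eq_signAux]
    unfold Equiv.Perm.signAux Equiv.Perm.finPairsLT
    rw [Finset.prod_sigma]
    have key : ∀ i j : Fin (2 * n), (j : ℕ) < (i : ℕ) →
        ((R i ≤ R j) ↔ ((i : ℕ) % 2 = 1 ∨ (j : ℕ) % 2 = 0)) := by
      intro i j hij
      have h1 := hR i
      have h2 := hR j
      have hi := i.isLt
      have hj := j.isLt
      rw [Fin.le_def, h1, h2]
      split_ifs <;> omega
    calc (∏ i : Fin (2 * n), ∏ j ∈ (Finset.range (i : ℕ)).attachFin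
            (fun _ hm => (Finset.mem_range.1 hm).trans i.2),
            (if R i ≤ R j then (-1 : ℤˣ) else 1))
        = ∏ i : Fin (2 * n), cR (i : ℕ) := by
          refine Finset.prod_congr rfl (fun i _ => ?_)
          rw [Finset.prod_congr rfl (fun j hj => if_congr
            (key i j (Finset.mem_range.1 ((Finset.mem_attachFin _).1 hj))) rfl rfl),
            my_prod_attachFin (Finset.range (i : ℕ)) _
              (fun m => if (i : ℕ) % 2 = 1 ∨ m % 2 = 0 then (-1 : ℤˣ) else 1)]
          rfl
      _ = ∏ i ∈ Finset.range (2 * n), cR i := Fin.prod_univ_eq_prod_range cR (2 * n)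
      _ = _ := AR n
end
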